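/- A Hurwitz quaternion p is a Hurwitz prime (i.e., p is nonzero, not a unit, and cannot be written as a product of two non-unit Hurwitz quaternions) if and only if its norm ‖p‖ is a (rational) prime number. -/

import Mathlib

noncomputable def qNorm (a : Quaternion ℝ) : ℝ :=
  a.re ^ 2 + a.imI ^ 2 + a.imJ ^ 2 + a.imK ^ 2

def IsHurwitz (a : Quaternion ℝ) : Prop :=
  (∃ x₁ x₂ x₃ x₄ : ℤ, a = ⟨(x₁ : ℝ), x₂, x₃, x₄⟩) ∨
  (∃ x₁ x₂ x₃ x₄ : ℤ, a = ⟨(x₁ : ℝ) + 1/2, (x₂ : ℝ) + 1/2, (x₃ : ℝ) + 1/2, (x₄ : ℝ) + 1/2⟩)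

def IsHurwitzPrime (p : Quaternion ℝ) : Prop :=
  IsHurwitz p ∧ ∃ r : ℕ, r.Prime ∧ qNorm p = r

/-!
A product of non-units has composite norm, since the norm is multiplicative and integral on
Hurwitz quaternions. Conversely, the Hurwitz order is left Euclidean for the norm (every
quaternion lies at norm distance `< 1` from a Hurwitz one), hence every left ideal is principal.
If a prime `q` divides `‖p‖`, a generator `d` of the left ideal spanned by `p` and `q` satisfies
`‖d‖ ∣ q²`. If `‖d‖ = q`, then `p = a d` splits off a factor of norm `q`; otherwise `q` divides
`p`, and writing `q = π̄ π` with `‖π‖ = q` (four squares) gives `p = (w π̄) π`.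
-/
open Quaternion

lemma qNorm_eq_normSq (a : ℍ[ℝ]) : qNorm a = normSq a := by
  rw [normSq_def']; rfl

lemma qNorm_mul (a b : ℍ[ℝ]) : qNorm (a * b) = qNorm a * qNorm b := by
  simp only [qNorm_eq_normSq, map_mul]

lemma qNorm_natCast (n : ℕ) : qNorm (n : ℍ[ℝ]) = (n : ℝ) ^ 2 := by
  rw [qNorm_eq_normSq, normSq_natCast]

lemma star_mul_self_eq_qNorm (a : ℍ[ℝ]) : star a * a = (qNorm a : ℍ[ℝ]) := by
  rw [star_mul_self, qNorm_eq_normSq]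

lemma self_mul_star_eq_qNorm (a : ℍ[ℝ]) : a * star a = (qNorm a : ℍ[ℝ]) := by
  rw [self_mul_star, qNorm_eq_normSq]

/- Hurwitz quaternions are the integer combinations of `1, i, j` and `ω = (1 + i + j + k) / 2`;
`c₄` is the coefficient of `ω`. -/
lemma isHurwitz_iff (a : ℍ[ℝ]) :
    IsHurwitz a ↔ ∃ c₁ c₂ c₃ c₄ : ℤ, a.re = c₁ + c₄ / 2 ∧ a.imI = c₂ + c₄ / 2 ∧
      a.imJ = c₃ + c₄ / 2 ∧ a.imK = c₄ / 2 := by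
  constructor
  · rintro (⟨x₁, x₂, x₃, x₄, rfl⟩ | ⟨x₁, x₂, x₃, x₄, rfl⟩)
    · exact ⟨x₁ - x₄, x₂ - x₄, x₃ - x₄, 2 * x₄, by dsimp only; push_cast; ring_nf; simp⟩
    · exact ⟨x₁ - x₄, x₂ - x₄, x₃ - x₄, 2 * x₄ + 1, by dsimp only; push_cast; ring_nf; simp⟩
  · rintro ⟨c₁, c₂, c₃, c₄, h₁, h₂, h₃, h₄⟩
    rcases Int.even_or_odd' c₄ with ⟨m, rfl | rfl⟩
    · refine Or.inl ⟨c₁ + m, c₂ + m, c₃ + m, m, ?_⟩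
      ext <;> simp only [h₁, h₂, h₃, h₄] <;> push_cast <;> ring
    · refine Or.inr ⟨c₁ + m, c₂ + m, c₃ + m, m, ?_⟩
      ext <;> simp only [h₁, h₂, h₃, h₄] <;> push_cast <;> ring

def hurwitzOrder : Subring ℍ[ℝ] where
  carrier := {a | IsHurwitz a}
  mul_mem' {a b} ha hb := by
    simp only [Set.mem_ofPred_eq, isHurwitz_iff] at ha hb ⊢
    obtain ⟨c₁, c₂, c₃, c₄, hc⟩ := ha
    obtain ⟨d₁, d₂, d₃, d₄, hd⟩ := hb
    refine ⟨c₁*d₁ - c₂*d₂ - c₂*d₃ - c₂*d₄ + c₃*d₂ - c₃*d₃ - c₄*d₃ - c₄*d₄,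
      c₁*d₂ + c₂*d₁ - c₂*d₃ + c₃*d₂ + c₃*d₄ + c₄*d₂ - c₄*d₃,
      c₁*d₃ - c₂*d₃ - c₂*d₄ + c₃*d₁ + c₃*d₂ + c₃*d₄ + c₄*d₂,
      c₁*d₄ + 2*c₂*d₃ + c₂*d₄ - 2*c₃*d₂ - c₃*d₄ + c₄*d₁ - c₄*d₂ + c₄*d₃ + c₄*d₄, ?_⟩
    simp only [re_mul, imI_mul, imJ_mul, imK_mul, hc, hd]
    push_cast
    refine ⟨?_, ?_, ?_, ?_⟩ <;> ring
  one_mem' := Or.inl ⟨1, 0, 0, 0, by ext <;> simp⟩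
  add_mem' {a b} ha hb := by
    simp only [Set.mem_ofPred_eq, isHurwitz_iff] at ha hb ⊢
    obtain ⟨c₁, c₂, c₃, c₄, hc⟩ := ha
    obtain ⟨d₁, d₂, d₃, d₄, hd⟩ := hb
    refine ⟨c₁ + d₁, c₂ + d₂, c₃ + d₃, c₄ + d₄, ?_⟩
    simp only [re_add, imI_add, imJ_add, imK_add, hc, hd]
    push_cast
    refine ⟨?_, ?_, ?_, ?_⟩ <;> ring
  zero_mem' := Or.inl ⟨0, 0, 0, 0, by ext <;> simp⟩
  neg_mem' {a} ha := by
    simp only [Set.mem_ofPred_eq, isHurwitz_iff] at ha ⊢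
    obtain ⟨c₁, c₂, c₃, c₄, hc⟩ := ha
    refine ⟨-c₁, -c₂, -c₃, -c₄, ?_⟩
    simp only [re_neg, imI_neg, imJ_neg, imK_neg, hc]
    push_cast
    refine ⟨?_, ?_, ?_, ?_⟩ <;> ring

lemma mem_hurwitzOrder {a : ℍ[ℝ]} : a ∈ hurwitzOrder ↔ IsHurwitz a := Iff.rfl

lemma star_mem_hurwitzOrder {a : ℍ[ℝ]} (ha : a ∈ hurwitzOrder) : star a ∈ hurwitzOrder := by
  rw [mem_hurwitzOrder, isHurwitz_iff] at ha ⊢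
  obtain ⟨c₁, c₂, c₃, c₄, hc⟩ := ha
  refine ⟨c₁ + c₄, -c₂, -c₃, -c₄, ?_⟩
  simp only [re_star, imI_star, imJ_star, imK_star, hc]
  push_cast
  refine ⟨?_, ?_, ?_, ?_⟩ <;> ring

lemma qNorm_nonneg (a : ℍ[ℝ]) : 0 ≤ qNorm a := by
  unfold qNorm; positivity

lemma exists_qNorm_eq_natCast {a : ℍ[ℝ]} (ha : a ∈ hurwitzOrder) : ∃ n : ℕ, qNorm a = n := by
  rw [mem_hurwitzOrder, isHurwitz_iff] at ha
  obtain ⟨c₁, c₂, c₃, c₄, h₁, h₂, h₃, h₄⟩ := ha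
  set N : ℤ := c₁ ^ 2 + c₂ ^ 2 + c₃ ^ 2 + c₄ ^ 2 + c₄ * (c₁ + c₂ + c₃)
  have hN : qNorm a = N := by
    unfold qNorm; rw [h₁, h₂, h₃, h₄]; push_cast [N]; ring
  have hN0 : 0 ≤ N := by exact_mod_cast hN ▸ qNorm_nonneg a
  exact ⟨N.toNat, by rw [hN, ← Int.cast_natCast, Int.toNat_of_nonneg hN0]⟩

lemma sq_sub_round_le (t : ℝ) : (t - round t) ^ 2 ≤ 1 / 4 := by
  nlinarith [abs_sub_round t, abs_nonneg (t - round t), sq_abs (t - round t)]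

lemma exists_intCast_add_half_of_sq_sub_round {t : ℝ} (h : (t - round t) ^ 2 = 1 / 4) :
    ∃ m : ℤ, t = m + 1 / 2 := by
  have h : (t - round t) ^ 2 = (1 / 2) ^ 2 := by rw [h]; norm_num
  rcases sq_eq_sq_iff_eq_or_eq_neg.mp h with h | h
  · exact ⟨round t, by linarith⟩
  · exact ⟨round t - 1, by push_cast; linarith⟩

lemma exists_qNorm_sub_lt_one (x : ℍ[ℝ]) : ∃ c ∈ hurwitzOrder, qNorm (x - c) < 1 := by
  set c : ℍ[ℝ] := ⟨round x.re, round x.imI, round x.imJ, round x.imK⟩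
  have hc : c ∈ hurwitzOrder := Or.inl ⟨_, _, _, _, rfl⟩
  have hxc : qNorm (x - c) = (x.re - round x.re) ^ 2 + (x.imI - round x.imI) ^ 2 +
      (x.imJ - round x.imJ) ^ 2 + (x.imK - round x.imK) ^ 2 := rfl
  have h₁ := sq_sub_round_le x.re
  have h₂ := sq_sub_round_le x.imI
  have h₃ := sq_sub_round_le x.imJ
  have h₄ := sq_sub_round_le x.imK
  rcases (show qNorm (x - c) ≤ 1 by linarith).lt_or_eq with hlt | heq
  · exact ⟨c, hc, hlt⟩
  -- otherwise every coordinate of `x` is off by `1 / 2` from an integer, so `x` is Hurwitz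
  obtain ⟨m₁, hm₁⟩ := exists_intCast_add_half_of_sq_sub_round (t := x.re) (by linarith)
  obtain ⟨m₂, hm₂⟩ := exists_intCast_add_half_of_sq_sub_round (t := x.imI) (by linarith)
  obtain ⟨m₃, hm₃⟩ := exists_intCast_add_half_of_sq_sub_round (t := x.imJ) (by linarith)
  obtain ⟨m₄, hm₄⟩ := exists_intCast_add_half_of_sq_sub_round (t := x.imK) (by linarith)
  exact ⟨x, Or.inr ⟨m₁, m₂, m₃, m₄, by ext <;> assumption⟩, by simp [qNorm]⟩

lemma exists_qNorm_sub_mul_lt (a : ℍ[ℝ]) {b : ℍ[ℝ]} (hb : b ≠ 0) :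
    ∃ c ∈ hurwitzOrder, qNorm (a - c * b) < qNorm b := by
  obtain ⟨c, hc, hlt⟩ := exists_qNorm_sub_lt_one (a * b⁻¹)
  refine ⟨c, hc, ?_⟩
  have hb' : 0 < qNorm b :=
    (qNorm_nonneg b).lt_of_ne' (by rw [qNorm_eq_normSq]; exact normSq_ne_zero.mpr hb)
  calc qNorm (a - c * b) = qNorm (a * b⁻¹ - c) * qNorm b := by
        rw [← qNorm_mul, sub_mul, mul_assoc, inv_mul_cancel₀ hb, mul_one]
    _ < 1 * qNorm b := by gcongr
    _ = qNorm b := one_mul _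

instance : IsPrincipalIdealRing hurwitzOrder where
  principal I := by
    classical
    by_cases hI : I = ⊥
    · exact hI ▸ bot_isPrincipal
    have hex : ∃ n : ℕ, ∃ d ∈ I, d ≠ 0 ∧ qNorm d = n := by
      obtain ⟨x, hxI, hx0⟩ := Submodule.exists_mem_ne_zero_of_ne_bot hI
      obtain ⟨n, hn⟩ := exists_qNorm_eq_natCast x.2
      exact ⟨n, x, hxI, hx0, hn⟩
    obtain ⟨d, hdI, hd0, hdn⟩ := Nat.find_spec hex
    refine ⟨d, le_antisymm (fun a haI => ?_) ((Ideal.span_singleton_le_iff_mem I).mpr hdI)⟩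
    obtain ⟨c, hc, hlt⟩ := exists_qNorm_sub_mul_lt a (b := d) (by exact_mod_cast hd0)
    set r : hurwitzOrder := a - ⟨c, hc⟩ * d
    have hr : r = 0 := by
      by_contra hr0
      obtain ⟨k, hk⟩ := exists_qNorm_eq_natCast r.2
      have hmin := Nat.find_min' hex ⟨r, I.sub_mem haI (I.mul_mem_left _ hdI), hr0, hk⟩
      have : (k : ℝ) < Nat.find hex := by rw [← hk, ← hdn]; exact_mod_cast hlt
      exact absurd hmin (by exact_mod_cast this.not_ge)
    exact Ideal.mem_span_singleton'.mpr ⟨⟨c, hc⟩, (sub_eq_zero.mp hr).symm⟩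

lemma exists_right_gcd {p q : ℍ[ℝ]} (hp : p ∈ hurwitzOrder) (hq : q ∈ hurwitzOrder) :
    ∃ d ∈ hurwitzOrder, (∃ x ∈ hurwitzOrder, ∃ y ∈ hurwitzOrder, x * p + y * q = d) ∧
      (∃ a ∈ hurwitzOrder, p = a * d) ∧ (∃ b ∈ hurwitzOrder, q = b * d) := by
  obtain ⟨d, hd⟩ := (IsPrincipalIdealRing.principal
    (Ideal.span {(⟨p, hp⟩ : hurwitzOrder), ⟨q, hq⟩})).principal
  have hmul : ∀ z ∈ Ideal.span {(⟨p, hp⟩ : hurwitzOrder), ⟨q, hq⟩}, ∃ a, a * d = z :=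
    fun z hz => Submodule.mem_span_singleton.mp (hd ▸ hz)
  obtain ⟨x, y, hxy⟩ := Ideal.mem_span_pair.mp (hd ▸ Submodule.mem_span_singleton_self d)
  obtain ⟨a, had⟩ := hmul ⟨p, hp⟩ (Ideal.subset_span (by simp))
  obtain ⟨b, hbd⟩ := hmul ⟨q, hq⟩ (Ideal.subset_span (by simp))
  exact ⟨d, d.2, ⟨x, x.2, y, y.2, congrArg Subtype.val hxy⟩,
    ⟨a, a.2, (congrArg Subtype.val had).symm⟩, ⟨b, b.2, (congrArg Subtype.val hbd).symm⟩⟩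

lemma exists_eq_mul_natCast_of_mul_add_mul_eq_one {p u v : ℍ[ℝ]} (hp : p ∈ hurwitzOrder)
    (hu : u ∈ hurwitzOrder) (hv : v ∈ hurwitzOrder) {n m : ℕ} (hpn : qNorm p = n * m)
    (h : u * p + v * n = 1) : ∃ w ∈ hurwitzOrder, p = w * n := by
  set w := u * m + v * star p
  have hw : w ∈ hurwitzOrder := add_mem (mul_mem hu (natCast_mem _ m))
    (mul_mem hv (star_mem_hurwitzOrder hp))
  have hstar : star p = w * n := by
    calc star p = (u * p + v * n) * star p := by rw [h, one_mul]
      _ = u * (p * star p) + v * star p * n := by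
        rw [add_mul, mul_assoc, mul_assoc, mul_assoc, Nat.cast_comm]
      _ = w * n := by
        rw [self_mul_star_eq_qNorm, hpn]; push_cast
        rw [Nat.cast_comm n (m : ℍ[ℝ]), ← mul_assoc, add_mul]
  refine ⟨star w, star_mem_hurwitzOrder hw, star_injective ?_⟩
  rw [star_mul, star_natCast, star_star, hstar, Nat.cast_comm]

lemma exists_right_factor_of_eq_mul_natCast {p w : ℍ[ℝ]} (hw : w ∈ hurwitzOrder) {n : ℕ}
    (h : p = w * n) : ∃ a ∈ hurwitzOrder, ∃ d ∈ hurwitzOrder, qNorm d = n ∧ p = a * d := by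
  obtain ⟨a₀, b₀, c₀, d₀, hsum⟩ := Nat.sum_four_squares n
  set π : ℍ[ℝ] := ⟨a₀, b₀, c₀, d₀⟩
  have hπ : π ∈ hurwitzOrder := Or.inl ⟨a₀, b₀, c₀, d₀, rfl⟩
  have hπn : qNorm π = n := by
    rw [← hsum]; push_cast; rfl
  refine ⟨w * star π, mul_mem hw (star_mem_hurwitzOrder hπ), π, hπ, hπn, ?_⟩
  rw [h, mul_assoc, star_mul_self_eq_qNorm, hπn, Quaternion.coe_natCast]

lemma exists_right_factor_of_prime_dvd_qNorm {p : ℍ[ℝ]} (hp : p ∈ hurwitzOrder) {q m : ℕ}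
    (hq : q.Prime) (hpq : qNorm p = q * m) :
    ∃ a ∈ hurwitzOrder, ∃ d ∈ hurwitzOrder, qNorm d = q ∧ p = a * d := by
  obtain ⟨d, hd, ⟨x, hx, y, hy, hxy⟩, ⟨a, ha, rfl⟩, ⟨b, hb, hbd⟩⟩ :=
    exists_right_gcd hp (natCast_mem hurwitzOrder q)
  obtain ⟨nb, hnb⟩ := exists_qNorm_eq_natCast hb
  obtain ⟨nd, hnd⟩ := exists_qNorm_eq_natCast hd
  have hq2 : q ^ 2 = nb * nd := by
    have := congrArg qNorm hbd
    rw [qNorm_natCast, qNorm_mul, hnb, hnd] at this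
    exact_mod_cast this
  obtain ⟨i, hi, hndi⟩ := (Nat.dvd_prime_pow hq).mp (Dvd.intro_left nb hq2.symm)
  interval_cases i
  · -- `‖d‖ = 1`: `d` is a unit, so `1` is a left combination of `p` and `q`
    have hdd : star d * d = 1 := by rw [star_mul_self_eq_qNorm, hnd, hndi]; simp
    obtain ⟨w, hw, hpw⟩ := exists_eq_mul_natCast_of_mul_add_mul_eq_one hp
      (mul_mem (star_mem_hurwitzOrder hd) hx) (mul_mem (star_mem_hurwitzOrder hd) hy) hpq
      (by rw [mul_assoc, mul_assoc, ← mul_add, hxy, hdd])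
    exact exists_right_factor_of_eq_mul_natCast hw hpw
  · exact ⟨a, ha, d, hd, by rw [hnd, hndi, pow_one], rfl⟩
  · -- `‖d‖ = q²`: then `‖b‖ = 1`, so `b` is a unit and `q` divides `d`
    have hnb1 : nb = 1 := by
      rw [hndi] at hq2
      exact (Nat.mul_eq_right (pow_ne_zero 2 hq.ne_zero)).mp hq2.symm
    have hbb : star b * b = 1 := by rw [star_mul_self_eq_qNorm, hnb, hnb1]; simp
    refine exists_right_factor_of_eq_mul_natCast (mul_mem ha (star_mem_hurwitzOrder hb)) ?_
    rw [mul_assoc, ← one_mul d, ← hbb, mul_assoc, ← hbd]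

lemma qNorm_eq_one_or_of_qNorm_mul_prime {a b : ℍ[ℝ]} (ha : a ∈ hurwitzOrder)
    (hb : b ∈ hurwitzOrder) {r : ℕ} (hr : r.Prime) (h : qNorm (a * b) = r) :
    qNorm a = 1 ∨ qNorm b = 1 := by
  obtain ⟨na, hna⟩ := exists_qNorm_eq_natCast ha
  obtain ⟨nb, hnb⟩ := exists_qNorm_eq_natCast hb
  rw [qNorm_mul, hna, hnb, ← Nat.cast_mul, Nat.cast_inj] at h
  rw [hna, hnb]
  rcases Nat.prime_mul_iff.mp (h ▸ hr) with ⟨-, h1⟩ | ⟨-, h1⟩ <;> simp [h1]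

theorem hurwitz_prime_iff_norm_prime (p : Quaternion ℝ) (hp : IsHurwitz p) :
    (p ≠ 0 ∧ qNorm p ≠ 1 ∧
      ¬ ∃ a b : Quaternion ℝ, IsHurwitz a ∧ IsHurwitz b ∧ qNorm a ≠ 1 ∧ qNorm b ≠ 1 ∧ p = a * b)
    ↔ ∃ r : ℕ, r.Prime ∧ qNorm p = r := by
  constructor
  · rintro ⟨-, hp1, hirred⟩
    obtain ⟨n, hn⟩ := exists_qNorm_eq_natCast hp
    by_contra hnp
    have hn1 : n ≠ 1 := by rintro rfl; exact hp1 (by simpa using hn)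
    have hq := Nat.minFac_prime hn1
    obtain ⟨a, ha, d, hd, hdq, rfl⟩ := exists_right_factor_of_prime_dvd_qNorm hp hq
      (m := n / n.minFac) (by rw [hn, ← Nat.cast_mul, Nat.mul_div_cancel' n.minFac_dvd])
    refine hirred ⟨a, d, ha, hd, fun ha1 => hnp ⟨n.minFac, hq, ?_⟩, ?_, rfl⟩
    · rw [qNorm_mul, ha1, one_mul, hdq]
    · rw [hdq]; exact_mod_cast hq.ne_one
  · rintro ⟨r, hr, hpr⟩
    refine ⟨?_, by rw [hpr]; exact_mod_cast hr.ne_one, ?_⟩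
    · rintro rfl
      have : (r : ℝ) = 0 := by rw [← hpr]; simp [qNorm]
      exact hr.ne_zero (by exact_mod_cast this)
    · rintro ⟨a, b, ha, hb, ha1, hb1, rfl⟩
      exact (qNorm_eq_one_or_of_qNorm_mul_prime ha hb hr hpr).elim ha1 hb1
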